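/- Suppose all n ≥ 3 data holders share the same strictly convex, strictly increasing, differentiable cost function C with C(0) = 0. Then the unique PCE allocation and the unique ONE allocation are both the symmetric allocation q_i = d/n for all i, and hence the total costs coincide: C* = C̄ = n·C(d/n). Moreover the equilibrium prices satisfy p* = ((n−1)/(n−2))·p̄, where p̄ = C'(d/n) and p* = (1 + (d/n)/(d − 2d/n))·C'(d/n), so p*/p̄ → 1 as n → ∞. -/

import Mathlib

/-!
Both allocation problems minimise a sum `∑ f (q i)` of one strictly convex function over
allocations with fixed total `d`, so by strict Jensen the uniform allocation `q i = d / n` is the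
unique minimiser. For the ONE objective `D`, strict convexity comes from its derivative
`(1 + q / (d - 2q)) C'(q)`: the markup factor is positive and increasing on `[0, d/2)`, and `C'` is
increasing, and positive because `C` is increasing. At `q = d / n` the markup equals
`1 + 1 / (n - 2) = (n - 1) / (n - 2)`.
-/

open Filter Set

theorem StrictConvexOn.sum_map_average_lt {ι : Type*} [Fintype ι] {s : Set ℝ} {f : ℝ → ℝ}
    (hf : StrictConvexOn ℝ s f) {q : ι → ℝ} (hq : ∀ i, q i ∈ s)
    (hne : q ≠ fun _ => (∑ i, q i) / Fintype.card ι) :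
    ∑ _i : ι, f ((∑ i, q i) / Fintype.card ι) < ∑ i, f (q i) := by
  have hι : Nonempty ι := by
    by_contra h
    exact hne (funext fun i => (h ⟨i⟩).elim)
  have hcard : (0 : ℝ) < Fintype.card ι := by exact_mod_cast Fintype.card_pos
  have hmean : ∑ i, (Fintype.card ι : ℝ)⁻¹ • q i = (∑ i, q i) / Fintype.card ι := by
    rw [← Finset.smul_sum, smul_eq_mul, inv_mul_eq_div]
  have hjensen := (hf.map_sum_lt_iff_of_pos' (t := Finset.univ)
    (w := fun _ => (Fintype.card ι : ℝ)⁻¹) (fun _ _ => inv_pos.mpr hcard) (by simp [hcard.ne'])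
    (fun i _ => hq i)).mpr <| by
      rw [hmean]
      by_contra! h
      exact hne (funext fun i => h i (Finset.mem_univ i))
  rw [hmean, ← Finset.smul_sum, smul_eq_mul, lt_inv_mul_iff₀ hcard] at hjensen
  simpa using hjensen

theorem StrictMonoOn.mul_of_pos_of_nonneg {α β : Type*} [Preorder α] [Semiring β]
    [PartialOrder β] [PosMulStrictMono β] [MulPosMono β] {f g : α → β} {s : Set α}
    (hf : StrictMonoOn f s) (hg : StrictMonoOn g s) (hf0 : ∀ x ∈ s, 0 < f x)
    (hg0 : ∀ x ∈ s, 0 ≤ g x) : StrictMonoOn (f * g) s := fun x hx y hy hxy =>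
  calc f x * g x < f x * g y := mul_lt_mul_of_pos_left (hg hx hy hxy) (hf0 x hx)
    _ ≤ f y * g y := mul_le_mul_of_nonneg_right (hf hx hy hxy).le (hg0 y hy)

theorem StrictMonoOn.strictConvexOn_of_hasDerivWithinAt {s : Set ℝ} (hs : Convex ℝ s)
    {f f' : ℝ → ℝ} (hf : ∀ x ∈ s, HasDerivWithinAt f (f' x) s x)
    (hf' : StrictMonoOn f' (interior s)) : StrictConvexOn ℝ s f := by
  refine StrictMonoOn.strictConvexOn_of_deriv hs (fun x hx => (hf x hx).continuousWithinAt) ?_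
  refine hf'.congr fun x hx => ?_
  exact ((hf x (interior_subset hx)).hasDerivAt (mem_interior_iff_mem_nhds.mp hx)).deriv.symm

theorem StrictConvexOn.deriv_pos_of_monotoneOn {f : ℝ → ℝ} {a x : ℝ}
    (hf : StrictConvexOn ℝ (Ici a) f) (hmono : MonotoneOn f (Ici a)) (hx : a < x)
    (hfx : DifferentiableAt ℝ f x) : 0 < deriv f x :=
  (hmono.slope_nonneg self_mem_Ici hx.le).trans_lt
    (hf.slope_lt_deriv self_mem_Ici (mem_Ici.mpr hx.le) hx hfx)

theorem strictMonoOn_one_add_div_sub_two_mul (d : ℝ) :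
    StrictMonoOn (fun q : ℝ => 1 + q / (d - 2 * q)) (Ico 0 (d / 2)) := by
  intro x ⟨hx0, hxd⟩ y ⟨_, hyd⟩ hxy
  have hdx : 0 < d - 2 * x := by linarith
  have hdy : 0 < d - 2 * y := by linarith
  simp only [add_lt_add_iff_left]
  rw [div_lt_div_iff₀ hdx hdy]
  nlinarith

theorem strictConvexOn_of_hasDerivWithinAt_one_add_div_sub_two_mul_mul_deriv {d : ℝ}
    {C D : ℝ → ℝ} (hCdiff : Differentiable ℝ C) (hCconv : StrictConvexOn ℝ (Ici 0) C)
    (hCmono : MonotoneOn C (Ici 0))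
    (hD' : ∀ q ∈ Ico 0 (d / 2),
      HasDerivWithinAt D ((1 + q / (d - 2 * q)) * deriv C q) (Ico 0 (d / 2)) q) :
    StrictConvexOn ℝ (Ico 0 (d / 2)) D := by
  refine StrictMonoOn.strictConvexOn_of_hasDerivWithinAt (convex_Ico _ _) hD' ?_
  rw [interior_Ico]
  refine StrictMonoOn.mul_of_pos_of_nonneg
    ((strictMonoOn_one_add_div_sub_two_mul d).mono Ioo_subset_Ico_self)
    ((hCconv.strictMonoOn_deriv fun x _ => hCdiff x).mono fun x hx => mem_Ici.mpr hx.1.le)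
    (fun q ⟨hq0, hqd⟩ => ?_)
    (fun q hq => (hCconv.deriv_pos_of_monotoneOn hCmono hq.1 (hCdiff q)).le)
  have : 0 < d - 2 * q := by linarith
  positivity

theorem one_add_div_div_sub_two_mul_div {d n : ℝ} (hd : d ≠ 0) (hn : n ≠ 0) (hn2 : n - 2 ≠ 0) :
    1 + (d / n) / (d - 2 * (d / n)) = (n - 1) / (n - 2) := by
  have : d - 2 * (d / n) = d * (n - 2) / n := by field_simp
  rw [this]
  field_simp
  ring

theorem tendsto_natCast_sub_one_div_natCast_sub_two :
    Tendsto (fun m : ℕ => ((m : ℝ) - 1) / ((m : ℝ) - 2)) atTop (nhds 1) := by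
  simpa [sub_eq_neg_add] using
    tendsto_add_mul_div_add_mul_atTop_nhds (-1 : ℝ) (-2) 1 one_ne_zero

theorem stmt_17_general (n : ℕ) (hn : 3 ≤ n) (d : ℝ) (hd : 0 < d) (C D : ℝ → ℝ)
    (hCdiff : Differentiable ℝ C)
    (hCconv : StrictConvexOn ℝ (Set.Ici 0) C)
    (hCmono : StrictMonoOn C (Set.Ici 0))
    (hD' : ∀ q ∈ Set.Ico 0 (d / 2),
      HasDerivWithinAt D ((1 + q / (d - 2 * q)) * deriv C q) (Set.Ico 0 (d / 2)) q) :
    -- the symmetric allocation is the unique PCE allocation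
    ((∀ q : Fin n → ℝ, (∀ i, 0 ≤ q i) → (∑ i, q i = d) →
        (q ≠ fun _ => d / n) → ∑ _i : Fin n, C (d / n) < ∑ i, C (q i)) ∧
    -- the symmetric allocation is the unique ONE allocation
      (∀ q : Fin n → ℝ, (∀ i, q i ∈ Set.Ico 0 (d / 2)) → (∑ i, q i = d) →
        (q ≠ fun _ => d / n) → ∑ _i : Fin n, D (d / n) < ∑ i, D (q i)) ∧
    -- hence total costs at PCE and ONE coincide: C* = C̄ = n·C(d/n)
      (∑ _i : Fin n, C (d / n) = n * C (d / n)) ∧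
    -- price relation p* = ((n−1)/(n−2)) p̄
      ((1 + (d / n) / (d - 2 * (d / n))) * deriv C (d / n) =
        ((n : ℝ) - 1) / ((n : ℝ) - 2) * deriv C (d / n)) ∧
    -- p*/p̄ → 1 as n → ∞
      Tendsto (fun m : ℕ => ((m : ℝ) - 1) / ((m : ℝ) - 2)) atTop (nhds 1)) := by
  have hDconv : StrictConvexOn ℝ (Ico 0 (d / 2)) D :=
    strictConvexOn_of_hasDerivWithinAt_one_add_div_sub_two_mul_mul_deriv hCdiff hCconv
      hCmono.monotoneOn hD'
  have hnR : (3 : ℝ) ≤ n := by exact_mod_cast hn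
  refine ⟨fun q hq hsum hne => ?_, fun q hq hsum hne => ?_, by simp, ?_,
    tendsto_natCast_sub_one_div_natCast_sub_two⟩
  · simpa [hsum] using hCconv.sum_map_average_lt hq (by simpa [hsum] using hne)
  · simpa [hsum] using hDconv.sum_map_average_lt hq (by simpa [hsum] using hne)
  · rw [one_add_div_div_sub_two_mul_div hd.ne' (by positivity) (by linarith)]

/-- homogeneous case: with `n ≥ 3` identical strictly convex,
strictly increasing, differentiable costs `C` (`C 0 = 0`), the symmetric
allocation `q_i = d/n` is the unique PCE allocation (minimizer of `∑ C(q_i)` over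
the simplex) and the unique ONE allocation (minimizer of `∑ D(q_i)` over
`{0 ≤ q_i < d/2, ∑ q_i = d}`), hence the total costs coincide; moreover the
prices satisfy `p* = ((n−1)/(n−2)) p̄` where `p̄ = C'(d/n)` and
`p* = (1 + (d/n)/(d − 2d/n)) C'(d/n)`, and `(n−1)/(n−2) → 1` as `n → ∞`. -/
theorem stmt_17 (n : ℕ) (hn : 3 ≤ n) (d : ℝ) (hd : 0 < d) (C D : ℝ → ℝ)
    (hCdiff : Differentiable ℝ C)
    (hCconv : StrictConvexOn ℝ (Set.Ici 0) C)
    (hCmono : StrictMonoOn C (Set.Ici 0))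
    (hC0 : C 0 = 0)
    (hD0 : D 0 = 0)
    (hD' : ∀ q ∈ Set.Ico 0 (d / 2),
      HasDerivWithinAt D ((1 + q / (d - 2 * q)) * deriv C q) (Set.Ico 0 (d / 2)) q) :
    -- the symmetric allocation is the unique PCE allocation
    ((∀ q : Fin n → ℝ, (∀ i, 0 ≤ q i) → (∑ i, q i = d) →
        (q ≠ fun _ => d / n) → ∑ _i : Fin n, C (d / n) < ∑ i, C (q i)) ∧
    -- the symmetric allocation is the unique ONE allocation
      (∀ q : Fin n → ℝ, (∀ i, q i ∈ Set.Ico 0 (d / 2)) → (∑ i, q i = d) →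
        (q ≠ fun _ => d / n) → ∑ _i : Fin n, D (d / n) < ∑ i, D (q i)) ∧
    -- hence total costs at PCE and ONE coincide: C* = C̄ = n·C(d/n)
      (∑ _i : Fin n, C (d / n) = n * C (d / n)) ∧
    -- price relation p* = ((n−1)/(n−2)) p̄
      ((1 + (d / n) / (d - 2 * (d / n))) * deriv C (d / n) =
        ((n : ℝ) - 1) / ((n : ℝ) - 2) * deriv C (d / n)) ∧
    -- p*/p̄ → 1 as n → ∞
      Tendsto (fun m : ℕ => ((m : ℝ) - 1) / ((m : ℝ) - 2)) atTop (nhds 1)) :=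
  stmt_17_general n hn d hd C D hCdiff hCconv hCmono hD'
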